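/- For every simple regular expression E over an alphabet α, the set of all iterated Antimirov partial derivatives of E, namely ⋃_{w ∈ α*} ∂_w(E), is a finite set of regular expressions. In particular the set {∂_w(E) | w ∈ α*} of sets of expressions is finite, i.e., the Antimirov derivation is finite. -/

import Mathlib

open scoped Classical

/-- The Antimirov partial derivative of a regular expression with respect to a symbol. -/
noncomputable def aderiv {α : Type*} (a : α) : RegularExpression α → Set (RegularExpression α)
  | .zero => ∅
  | .epsilon => ∅
  | .char b => if b = a then {1} else ∅
  | .plus E₁ E₂ => aderiv a E₁ ∪ aderiv a E₂
  | .comp E₁ E₂ =>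
      if [] ∈ E₁.matches' then ((· * E₂) '' aderiv a E₁) ∪ aderiv a E₂
      else (· * E₂) '' aderiv a E₁
  | .star E₁ => (· * E₁.star) '' aderiv a E₁

/-- Iterated Antimirov partial derivative with respect to a word. -/
noncomputable def aderivWord {α : Type*} : List α → RegularExpression α → Set (RegularExpression α)
  | [], E => {E}
  | a :: w, E => ⋃ F ∈ aderiv a E, aderivWord w F

/-- Left quotient of a language by a word. -/
def lquot {α : Type*} (w : List α) (L : Language α) : Language α := {v | w ++ v ∈ L}

/-!
Following Antimirov, every partial derivative `∂ₐ(E)` lies in the finite set `π(E)` obtained by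
dropping the symbol test and the nullability test from the definition of `∂ₐ`, and `π(E)` is
closed under `∂ₐ` for every `a`. Hence all iterated derivatives `∂_w(E)` lie in the finite set
`{E} ∪ π(E)`, and the sets `∂_w(E)` range over its finitely many subsets.
-/

section Antimirov

variable {α : Type*}

/-- Antimirov's `π(E)`. -/
def antimirovPi : RegularExpression α → Set (RegularExpression α)
  | .zero => ∅
  | .epsilon => ∅
  | .char _ => {1}
  | .plus E₁ E₂ => antimirovPi E₁ ∪ antimirovPi E₂
  | .comp E₁ E₂ => ((· * E₂) '' antimirovPi E₁) ∪ antimirovPi E₂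
  | .star E₁ => (· * E₁.star) '' antimirovPi E₁

theorem antimirovPi_finite (E : RegularExpression α) : (antimirovPi E).Finite := by
  induction E with
  | zero => exact Set.finite_empty
  | epsilon => exact Set.finite_empty
  | char _ => exact Set.finite_singleton _
  | plus E₁ E₂ ih₁ ih₂ => exact ih₁.union ih₂
  | comp E₁ E₂ ih₁ ih₂ => exact (ih₁.image _).union ih₂
  | star E₁ ih => exact ih.image _

theorem aderiv_mul_subset (a : α) (E₁ E₂ : RegularExpression α) :
    aderiv a (E₁ * E₂) ⊆ ((· * E₂) '' aderiv a E₁) ∪ aderiv a E₂ := by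
  show aderiv a (.comp E₁ E₂) ⊆ _
  rw [aderiv]
  split
  · exact subset_rfl
  · exact Set.subset_union_left

theorem aderiv_subset_antimirovPi (a : α) (E : RegularExpression α) :
    aderiv a E ⊆ antimirovPi E := by
  induction E with
  | zero => exact subset_rfl
  | epsilon => exact subset_rfl
  | char b =>
      rw [aderiv]
      split
      · exact subset_rfl
      · exact Set.empty_subset _
  | plus E₁ E₂ ih₁ ih₂ => exact Set.union_subset_union ih₁ ih₂
  | comp E₁ E₂ ih₁ ih₂ =>
      exact (aderiv_mul_subset a E₁ E₂).trans (Set.union_subset_union (Set.image_mono ih₁) ih₂)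
  | star E₁ ih => exact Set.image_mono ih

theorem aderiv_subset_antimirovPi_of_mem (a : α) {E F : RegularExpression α}
    (hF : F ∈ antimirovPi E) : aderiv a F ⊆ antimirovPi E := by
  induction E generalizing F with
  | zero => exact absurd hF (Set.notMem_empty F)
  | epsilon => exact absurd hF (Set.notMem_empty F)
  | char b =>
      rw [antimirovPi, Set.mem_singleton_iff] at hF
      subst hF
      exact Set.empty_subset _
  | plus E₁ E₂ ih₁ ih₂ =>
      rcases hF with hF₁ | hF₂
      · exact (ih₁ hF₁).trans Set.subset_union_left
      · exact (ih₂ hF₂).trans Set.subset_union_right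
  | comp E₁ E₂ ih₁ ih₂ =>
      rcases hF with ⟨G, hG, rfl⟩ | hF₂
      · exact (aderiv_mul_subset a G E₂).trans
          (Set.union_subset_union (Set.image_mono (ih₁ hG)) (aderiv_subset_antimirovPi a E₂))
      · exact (ih₂ hF₂).trans Set.subset_union_right
  | star E₁ ih =>
      obtain ⟨G, hG, rfl⟩ := hF
      refine (aderiv_mul_subset a G E₁.star).trans (Set.union_subset (Set.image_mono (ih hG)) ?_)
      exact Set.image_mono (aderiv_subset_antimirovPi a E₁)

theorem aderivWord_subset_of_aderiv_subset {S : Set (RegularExpression α)}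
    (hS : ∀ a, ∀ F ∈ S, aderiv a F ⊆ S) (w : List α) {F : RegularExpression α} (hF : F ∈ S) :
    aderivWord w F ⊆ S := by
  induction w generalizing F with
  | nil => exact Set.singleton_subset_iff.mpr hF
  | cons a w ih => exact Set.iUnion₂_subset fun G hG => ih (hS a F hF hG)

theorem aderivWord_subset_insert_antimirovPi (w : List α) (E : RegularExpression α) :
    aderivWord w E ⊆ insert E (antimirovPi E) := by
  refine aderivWord_subset_of_aderiv_subset ?_ w (Set.mem_insert E _)
  rintro a F (rfl | hF)
  · exact (aderiv_subset_antimirovPi a F).trans (Set.subset_insert F _)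
  · exact (aderiv_subset_antimirovPi_of_mem a hF).trans (Set.subset_insert E _)

end Antimirov

theorem antimirov_finiteness {α : Type*} (E : RegularExpression α) :
    (⋃ w : List α, aderivWord w E).Finite ∧
      (Set.range fun w : List α => aderivWord w E).Finite := by
  have hfin : (insert E (antimirovPi E)).Finite := (antimirovPi_finite E).insert E
  refine ⟨hfin.subset (Set.iUnion_subset fun w => aderivWord_subset_insert_antimirovPi w E), ?_⟩
  refine hfin.finite_subsets.subset ?_
  rintro _ ⟨w, rfl⟩
  exact aderivWord_subset_insert_antimirovPi w E
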